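/- Let κ > 0 and h_{F,3}(z) = 1 + κ⁻¹·ln((1+z)/2 + ((1−z)/2)·e^{−2κ}). Then lim_{z → 1⁻} (1 − h_{F,3}(z)²)/(1 − z²) = (1 − e^{−2κ})/(2κ). Moreover, κ·(1 − e^{−2κ})/(2κ) → 1/2 as κ → ∞, i.e. the limiting coordinate scaling factor of the D = 3 Fisher zoom near the pole is asymptotically C/√κ with C = 1/√2 = ((2π)/S₂)^{1/2} where S₂ = 4π is the surface area of S². -/

import Mathlib

open Real Filter Topology

/-- `h_{F,3}(z) = 1 + κ⁻¹·ln((1+z)/2 + ((1−z)/2)·e^{−2κ})`. -/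
noncomputable def hF3 (κ : ℝ) (z : ℝ) : ℝ :=
  1 + κ⁻¹ * Real.log ((1 + z) / 2 + (1 - z) / 2 * Real.exp (-2 * κ))

lemma hF3_one (κ : ℝ) : hF3 κ 1 = 1 := by
  simp [hF3]

lemma hF3_hasDerivAt_one (κ : ℝ) :
    HasDerivAt (hF3 κ) (κ⁻¹ * ((1 - Real.exp (-2 * κ)) / 2)) 1 := by
  set E := Real.exp (-2 * κ) with hE
  have harg : HasDerivAt (fun z : ℝ => (1 + z) / 2 + (1 - z) / 2 * E)
      (1 / 2 + (-1) / 2 * E) 1 := by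
    have h1 : HasDerivAt (fun z : ℝ => (1 + z) / 2) (1 / 2) 1 := by
      simpa using ((hasDerivAt_id (1:ℝ)).const_add 1).div_const 2
    have h2 : HasDerivAt (fun z : ℝ => (1 - z) / 2 * E) ((-1) / 2 * E) 1 := by
      simpa using (((hasDerivAt_id (1:ℝ)).const_sub 1).div_const 2).mul_const E
    exact h1.add h2
  have hargval : (1 + (1:ℝ)) / 2 + (1 - 1) / 2 * E = 1 := by ring
  have hlog : HasDerivAt (fun z : ℝ => Real.log ((1 + z) / 2 + (1 - z) / 2 * E))
      ((1 / 2 + (-1) / 2 * E) / 1) 1 := by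
    have := harg.log (by rw [hargval]; norm_num)
    simpa [hargval] using this
  have : HasDerivAt (hF3 κ) (κ⁻¹ * ((1 / 2 + (-1) / 2 * E) / 1)) 1 := by
    unfold hF3
    exact (hlog.const_mul κ⁻¹).const_add 1
  convert this using 1
  ring

/-- `lim_{z → 1⁻} (1 − h_{F,3}(z)²)/(1 − z²) = (1 − e^{−2κ})/(2κ)`, and
`κ·(1 − e^{−2κ})/(2κ) → 1/2` as `κ → ∞`, with `1/2 = C²` for `C = √(2π/S₂)`, `S₂ = 4π`. -/
theorem fisherZoom_scaling_dim_three (κ : ℝ) (hκ : 0 < κ) :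
    Tendsto (fun z : ℝ => (1 - hF3 κ z ^ 2) / (1 - z ^ 2)) (nhdsWithin 1 (Set.Iio 1))
        (nhds ((1 - Real.exp (-2 * κ)) / (2 * κ))) ∧
      Tendsto (fun k : ℝ => k * ((1 - Real.exp (-2 * k)) / (2 * k))) atTop
        (nhds (1 / 2)) ∧
      (1 / 2 : ℝ) = ((2 * π) / (4 * π)) := by
  refine ⟨?_, ?_, ?_⟩
  · -- L'Hôpital via slopes
    set E := Real.exp (-2 * κ) with hE
    have hg : HasDerivAt (fun z : ℝ => 1 - hF3 κ z ^ 2) (-(κ⁻¹ * (1 - E))) 1 := by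
      have := ((hF3_hasDerivAt_one κ).fun_pow 2).const_sub 1
      refine this.congr_deriv ?_
      rw [hF3_one]; ring
    have hq : HasDerivAt (fun z : ℝ => 1 - z ^ 2) (-2 : ℝ) 1 := by
      simpa using ((hasDerivAt_id (1:ℝ)).pow 2).const_sub 1
    have hsg : Tendsto (slope (fun z : ℝ => 1 - hF3 κ z ^ 2) 1) (𝓝[≠] 1)
        (𝓝 (-(κ⁻¹ * (1 - E)))) := hasDerivAt_iff_tendsto_slope.mp hg
    have hsq : Tendsto (slope (fun z : ℝ => 1 - z ^ 2) 1) (𝓝[≠] 1) (𝓝 (-2)) :=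
      hasDerivAt_iff_tendsto_slope.mp hq
    have hdiv : Tendsto (fun z => slope (fun z : ℝ => 1 - hF3 κ z ^ 2) 1 z /
        slope (fun z : ℝ => 1 - z ^ 2) 1 z) (𝓝[≠] 1)
        (𝓝 ((-(κ⁻¹ * (1 - E))) / (-2))) := hsg.div hsq (by norm_num)
    have hmono : (𝓝[Set.Iio (1:ℝ)] 1) ≤ 𝓝[≠] (1:ℝ) :=
      nhdsWithin_mono 1 (fun x hx => ne_of_lt hx)
    have hval : (-(κ⁻¹ * (1 - E))) / (-2) = (1 - E) / (2 * κ) := by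
      field_simp
    have := (hdiv.mono_left hmono)
    rw [hval] at this
    refine this.congr' ?_
    filter_upwards [self_mem_nhdsWithin] with z hz
    have hz1 : z - 1 ≠ 0 := by
      have : z < 1 := hz
      intro h; nlinarith
    simp only [slope_def_field, hF3_one]
    rw [show (1:ℝ) - 1 ^ 2 = 0 by norm_num, sub_zero, sub_zero, div_div_div_cancel_right₀ hz1]
  · have h1 : Tendsto (fun k : ℝ => Real.exp (-2 * k)) atTop (𝓝 0) := by
      have : Tendsto (fun k : ℝ => -2 * k) atTop atBot :=
        (tendsto_const_mul_atBot_of_neg (by norm_num)).mpr tendsto_id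
      exact Real.tendsto_exp_atBot.comp this
    have h2 : Tendsto (fun k : ℝ => (1 - Real.exp (-2 * k)) / 2) atTop (𝓝 ((1 - 0) / 2)) :=
      ((tendsto_const_nhds.sub h1).div_const 2)
    have h3 : Tendsto (fun k : ℝ => (1 - Real.exp (-2 * k)) / 2) atTop (𝓝 (1 / 2)) := by
      simpa using h2
    refine h3.congr' ?_
    filter_upwards [eventually_gt_atTop 0] with k hk
    field_simp
  · have : (π : ℝ) ≠ 0 := Real.pi_ne_zero
    field_simp
    ring
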